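/- arXiv:0808.1206 — 3 statements merged into one kernel-verified Lean document; each statement's English description precedes it below -/
import Mathlib

section
/- Let a ∈ (0,1), γ(z) = (z − a)/(1 − a z), and let Γ₂ be the group of Möbius automorphisms of the disk generated by β(z) = −z and γ. Then Γ₂ is isomorphic to the free product ℤ/2 ∗ ℤ/2; equivalently, setting α = β ∘ γ, every element of Γ₂ is uniquely of the form α^m or α^m ∘ β with m ∈ ℤ, and α^m is the identity only when m = 0. -/
/-!
Write `φ_b z = (z - b) / (1 - b z)` for `-1 < b < 1`. These maps preserve the unit disk and
compose like hyperbolic tangents, `φ_b ∘ φ_c = φ_{(b + c)/(1 + bc)}`, so `γ^m = φ_{b_m}` with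
`b_m = tanh (m artanh a)`; moreover `β` conjugates `φ_b` to `φ_{-b}`. Hence the maps `γ^m` and
`γ^m ∘ β` form a set closed under composition that contains the generators, and it contains the
whole group. Uniqueness comes from evaluating at `0`: `γ^m 0 = -b_m` determines `m` because
`m ↦ b_m` is injective for `a ≠ 0`, and `γ^m = γ^k ∘ β` would force `γ^m = γ^k`, an injective map
identifying `z` with `-z`.
-/

open Complex Set

noncomputable section

/-- The parameters `a_m = ((1+a)^m − (1−a)^m)/((1+a)^m + (1−a)^m)` for `m : ℤ`. -/
def bseq (a : ℝ) (m : ℤ) : ℝ :=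
  ((1 + a) ^ m - (1 - a) ^ m) / ((1 + a) ^ m + (1 - a) ^ m)

/-- The `m`-th power (for `m : ℤ`) of the hyperbolic map `γ(z) = (z − a)/(1 − a z)`. -/
def gammaPow (a : ℝ) (m : ℤ) : ℂ → ℂ :=
  fun z => (z - (bseq a m : ℝ)) / (1 - (bseq a m : ℝ) * z)

open Metric

lemma Set.EqOn.comp_of_mapsTo {α : Type*} {s : Set α} {f F g G : α → α} (hf : EqOn f F s)
    (hg : EqOn g G s) (hG : MapsTo G s s) : EqOn (f ∘ g) (F ∘ G) s :=
  hg.comp_left.trans (hf.comp_right hG)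

lemma mapsTo_neg_ball {E : Type*} [SeminormedAddCommGroup E] (r : ℝ) :
    MapsTo (Neg.neg : E → E) (ball 0 r) (ball 0 r) := by
  intro z hz
  rwa [mem_ball_zero_iff, norm_neg, ← mem_ball_zero_iff]

def moebius (b : ℝ) (z : ℂ) : ℂ := (z - (b : ℂ)) / (1 - (b : ℂ) * z)

section Moebius

variable {b c : ℝ} {z : ℂ}

lemma moebius_zero : moebius 0 = id := by
  funext z; simp [moebius]

lemma moebius_apply_zero (b : ℝ) : moebius b 0 = -b := by
  simp [moebius]

lemma moebius_apply_neg (b : ℝ) (z : ℂ) : moebius b (-z) = -moebius (-b) z := by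
  simp only [moebius, ofReal_neg]
  rw [← neg_div]
  ring_nf

lemma one_sub_ofReal_mul_ne_zero (hb : |b| < 1) (hz : ‖z‖ < 1) : 1 - (b : ℂ) * z ≠ 0 := by
  have : ‖(b : ℂ) * z‖ < 1 := by
    rw [norm_mul, norm_real, Real.norm_eq_abs]
    nlinarith [abs_nonneg b, norm_nonneg z]
  intro h
  rw [← eq_of_sub_eq_zero h, norm_one] at this
  exact this.false

lemma norm_moebius_lt_one (hb : |b| < 1) (hz : ‖z‖ < 1) : ‖moebius b z‖ < 1 := by
  have hden := one_sub_ofReal_mul_ne_zero hb hz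
  rw [moebius, norm_div, div_lt_one (norm_pos_iff.2 hden)]
  have hb2 : b ^ 2 < 1 := by nlinarith [abs_nonneg b, sq_abs b]
  have hz2 : z.re * z.re + z.im * z.im < 1 := by
    rw [← normSq_apply, ← Complex.sq_norm]
    nlinarith [norm_nonneg z]
  -- `|1 - b z|² - |z - b|² = (1 - b²)(1 - |z|²)`
  rw [← sq_lt_sq₀ (norm_nonneg _) (norm_nonneg _), Complex.sq_norm, Complex.sq_norm,
    normSq_apply, normSq_apply]
  simp only [sub_re, sub_im, mul_re, mul_im, one_re, one_im, ofReal_re, ofReal_im]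
  nlinarith [mul_pos (sub_pos.2 hb2) (sub_pos.2 hz2)]

lemma mapsTo_moebius (hb : |b| < 1) : MapsTo (moebius b) (ball 0 1) (ball 0 1) := by
  intro z hz
  rw [mem_ball_zero_iff] at hz ⊢
  exact norm_moebius_lt_one hb hz

lemma moebius_moebius (hb : |b| < 1) (hc : |c| < 1) (hz : ‖z‖ < 1) :
    moebius b (moebius c z) = moebius ((b + c) / (1 + b * c)) z := by
  obtain ⟨hb₁, hb₂⟩ := abs_lt.1 hb
  obtain ⟨hc₁, hc₂⟩ := abs_lt.1 hc
  have hbc : 0 < 1 + b * c := by nlinarith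
  set d := (b + c) / (1 + b * c)
  have hd : |d| < 1 := by
    rw [abs_div, abs_of_pos hbc, div_lt_one hbc, abs_lt]
    constructor <;> nlinarith
  have hcz := one_sub_ofReal_mul_ne_zero hc hz
  have hw : moebius c z * (1 - c * z) = z - c := div_mul_cancel₀ _ hcz
  have hbw := one_sub_ofReal_mul_ne_zero hb (norm_moebius_lt_one hc hz)
  generalize moebius c z = w at hw hbw ⊢
  have hd' : (d : ℂ) * (1 + b * c) = b + c := by exact_mod_cast div_mul_cancel₀ _ hbc.ne'
  rw [moebius, moebius, div_eq_div_iff hbw (one_sub_ofReal_mul_ne_zero hd hz)]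
  refine mul_right_cancel₀ hcz ?_
  linear_combination (1 - d * z + b * z - b * d) * hw + (1 - z ^ 2) * hd'

lemma moebius_injOn (hb : |b| < 1) : InjOn (moebius b) (ball 0 1) := by
  intro z hz w hw h
  rw [mem_ball_zero_iff] at hz hw
  have hb2 : (1 : ℂ) - (b : ℂ) ^ 2 ≠ 0 := by
    norm_cast
    nlinarith [abs_nonneg b, sq_abs b]
  rw [moebius, moebius, div_eq_div_iff (one_sub_ofReal_mul_ne_zero hb hz)
    (one_sub_ofReal_mul_ne_zero hb hw)] at h
  have : (z - w) * (1 - (b : ℂ) ^ 2) = 0 := by linear_combination h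
  exact sub_eq_zero.1 ((mul_eq_zero.1 this).resolve_right hb2)

end Moebius

section Bseq

variable {a : ℝ}

lemma bseq_zero (a : ℝ) : bseq a 0 = 0 := by simp [bseq]

lemma bseq_one (a : ℝ) : bseq a 1 = a := by
  rw [bseq, zpow_one, zpow_one]
  ring

lemma bseq_neg (ha : |a| < 1) (m : ℤ) : bseq a (-m) = -bseq a m := by
  obtain ⟨ha₁, ha₂⟩ := abs_lt.1 ha
  have hp : 0 < (1 + a) ^ m := zpow_pos (by linarith) m
  have hq : 0 < (1 - a) ^ m := zpow_pos (by linarith) m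
  rw [bseq, bseq, zpow_neg, zpow_neg]
  field_simp
  ring

lemma abs_bseq_lt_one (ha : |a| < 1) (m : ℤ) : |bseq a m| < 1 := by
  obtain ⟨ha₁, ha₂⟩ := abs_lt.1 ha
  have hp : 0 < (1 + a) ^ m := zpow_pos (by linarith) m
  have hq : 0 < (1 - a) ^ m := zpow_pos (by linarith) m
  rw [bseq, abs_div, abs_of_pos (add_pos hp hq), div_lt_one (add_pos hp hq), abs_lt]
  constructor <;> linarith

/-- `bseq a m = tanh (m artanh a)`, so this is the addition formula for `tanh`. -/
lemma bseq_add (ha : |a| < 1) (m k : ℤ) :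
    bseq a (m + k) = (bseq a m + bseq a k) / (1 + bseq a m * bseq a k) := by
  have hden : 0 < 1 + bseq a m * bseq a k := by
    have := abs_mul (bseq a m) (bseq a k) ▸ mul_lt_one_of_nonneg_of_lt_one_left (abs_nonneg _)
      (abs_bseq_lt_one ha m) (abs_bseq_lt_one ha k).le
    linarith [neg_abs_le (bseq a m * bseq a k)]
  obtain ⟨ha₁, ha₂⟩ := abs_lt.1 ha
  have hp : 0 < 1 + a := by linarith
  have hq : 0 < 1 - a := by linarith
  have hpm : 0 < (1 + a) ^ m := zpow_pos hp m
  have hqm : 0 < (1 - a) ^ m := zpow_pos hq m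
  have hpk : 0 < (1 + a) ^ k := zpow_pos hp k
  have hqk : 0 < (1 - a) ^ k := zpow_pos hq k
  rw [eq_div_iff hden.ne']
  simp only [bseq, zpow_add₀ hp.ne', zpow_add₀ hq.ne']
  field_simp
  ring

lemma bseq_injective (ha : |a| < 1) (ha₀ : a ≠ 0) : Function.Injective (bseq a) := by
  obtain ⟨ha₁, ha₂⟩ := abs_lt.1 ha
  have hp : 0 < 1 + a := by linarith
  have hq : 0 < 1 - a := by linarith
  intro m k h
  have hpm : 0 < (1 + a) ^ m := zpow_pos hp m
  have hqm : 0 < (1 - a) ^ m := zpow_pos hq m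
  have hpk : 0 < (1 + a) ^ k := zpow_pos hp k
  have hqk : 0 < (1 - a) ^ k := zpow_pos hq k
  rw [bseq, bseq, div_eq_div_iff (by positivity) (by positivity)] at h
  refine zpow_right_injective₀ (div_pos hp hq) ?_ ?_
  · rw [Ne, div_eq_one_iff_eq hq.ne']
    exact fun h' => ha₀ (by linarith)
  · simp only [div_zpow]
    rw [div_eq_div_iff hqm.ne' hqk.ne']
    linear_combination h / 2

end Bseq

section GammaPow

variable {a : ℝ}

lemma gammaPow_eq_moebius (a : ℝ) (m : ℤ) : gammaPow a m = moebius (bseq a m) := rfl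

lemma gammaPow_zero (a : ℝ) : gammaPow a 0 = id := by
  rw [gammaPow_eq_moebius, bseq_zero, moebius_zero]

lemma gammaPow_one (a : ℝ) : gammaPow a 1 = fun z : ℂ => (z - a) / (1 - a * z) := by
  rw [gammaPow_eq_moebius, bseq_one]
  rfl

lemma gammaPow_neg_one (ha : |a| < 1) :
    gammaPow a (-1) = fun z : ℂ => (z + a) / (1 + a * z) := by
  funext z
  rw [gammaPow_eq_moebius, bseq_neg ha, bseq_one, moebius, ofReal_neg, sub_neg_eq_add, neg_mul,
    sub_neg_eq_add]

lemma gammaPow_apply_zero (a : ℝ) (m : ℤ) : gammaPow a m 0 = -bseq a m :=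
  moebius_apply_zero _

lemma gammaPow_apply_neg (ha : |a| < 1) (m : ℤ) (z : ℂ) :
    gammaPow a m (-z) = -gammaPow a (-m) z := by
  rw [gammaPow_eq_moebius, gammaPow_eq_moebius, moebius_apply_neg, bseq_neg ha]

lemma mapsTo_gammaPow (ha : |a| < 1) (m : ℤ) : MapsTo (gammaPow a m) (ball 0 1) (ball 0 1) :=
  mapsTo_moebius (abs_bseq_lt_one ha m)

lemma gammaPow_gammaPow (ha : |a| < 1) (m k : ℤ) {z : ℂ} (hz : z ∈ ball (0 : ℂ) 1) :
    gammaPow a m (gammaPow a k z) = gammaPow a (m + k) z := by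
  rw [mem_ball_zero_iff] at hz
  simp only [gammaPow_eq_moebius]
  rw [moebius_moebius (abs_bseq_lt_one ha m) (abs_bseq_lt_one ha k) hz, bseq_add ha]

lemma eq_of_eqOn_gammaPow (ha : |a| < 1) (ha₀ : a ≠ 0) {m k : ℤ}
    (h : EqOn (gammaPow a m) (gammaPow a k) (ball 0 1)) : m = k := by
  have h0 := h (mem_ball_self one_pos)
  rw [gammaPow_apply_zero, gammaPow_apply_zero, neg_inj, ofReal_inj] at h0
  exact bseq_injective ha ha₀ h0

lemma not_eqOn_gammaPow_comp_neg (ha : |a| < 1) (m k : ℤ) :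
    ¬ EqOn (gammaPow a m) (gammaPow a k ∘ Neg.neg) (ball 0 1) := by
  intro h
  have h0 := h (mem_ball_self one_pos)
  rw [Function.comp_apply, neg_zero, gammaPow_apply_zero, gammaPow_apply_zero, neg_inj,
    ofReal_inj] at h0
  have hz : (1 / 2 : ℂ) ∈ ball (0 : ℂ) 1 := by
    rw [mem_ball_zero_iff]
    norm_num
  have h' := h hz
  rw [Function.comp_apply, gammaPow_eq_moebius, gammaPow_eq_moebius, ← h0] at h'
  have := moebius_injOn (abs_bseq_lt_one ha m) hz (mapsTo_neg_ball 1 hz) h'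
  norm_num at this

end GammaPow

def normalForms (a : ℝ) : Set (ℂ → ℂ) :=
  {f | ∃ m : ℤ, EqOn f (gammaPow a m) (ball 0 1) ∨ EqOn f (gammaPow a m ∘ Neg.neg) (ball 0 1)}

lemma comp_mem_normalForms {a : ℝ} (ha : |a| < 1) {f g : ℂ → ℂ} (hf : f ∈ normalForms a)
    (hg : g ∈ normalForms a) : f ∘ g ∈ normalForms a := by
  obtain ⟨m, hf | hf⟩ := hf <;> obtain ⟨k, hg | hg⟩ := hg
  · refine ⟨m + k, Or.inl ((hf.comp_of_mapsTo hg (mapsTo_gammaPow ha k)).trans ?_)⟩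
    exact fun z hz => gammaPow_gammaPow ha m k hz
  · refine ⟨m + k, Or.inr ((hf.comp_of_mapsTo hg
      ((mapsTo_gammaPow ha k).comp (mapsTo_neg_ball 1))).trans ?_)⟩
    exact fun z hz => gammaPow_gammaPow ha m k (mapsTo_neg_ball 1 hz)
  · refine ⟨m - k, Or.inr ((hf.comp_of_mapsTo hg (mapsTo_gammaPow ha k)).trans ?_)⟩
    intro z hz
    simp only [Function.comp_apply]
    rw [gammaPow_apply_neg ha, gammaPow_gammaPow ha _ _ hz, gammaPow_apply_neg ha, neg_sub',
      sub_neg_eq_add, neg_add_eq_sub]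
  · refine ⟨m - k, Or.inl ((hf.comp_of_mapsTo hg
      ((mapsTo_gammaPow ha k).comp (mapsTo_neg_ball 1))).trans ?_)⟩
    intro z hz
    simp only [Function.comp_apply]
    rw [gammaPow_apply_neg ha k, neg_neg, gammaPow_gammaPow ha _ _ hz, sub_eq_add_neg]

lemma gammaPow_mem_normalForms (a : ℝ) (m : ℤ) : gammaPow a m ∈ normalForms a :=
  ⟨m, Or.inl (eqOn_refl _ _)⟩

lemma neg_mem_normalForms (a : ℝ) : (fun z : ℂ => -z) ∈ normalForms a :=
  ⟨0, Or.inr (by rw [gammaPow_zero]; exact eqOn_refl _ _)⟩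

theorem group_generated_by_two_involutions_general
    (a : ℝ) (ha : a ∈ Set.Ioo (0:ℝ) 1)
    (β γ γinv : ℂ → ℂ)
    (hβ : β = fun z => -z)
    (hγ : γ = fun z : ℂ => (z - (a:ℂ)) / (1 - (a:ℂ) * z))
    (hγinv : γinv = fun z : ℂ => (z + (a:ℂ)) / (1 + (a:ℂ) * z))
    (Γ₂ : Set (ℂ → ℂ))
    (hmin : ∀ S : Set (ℂ → ℂ), id ∈ S → β ∈ S → γ ∈ S → γinv ∈ S →
      (∀ f ∈ S, ∀ g ∈ S, f ∘ g ∈ S) → Γ₂ ⊆ S) :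
    (∀ f ∈ Γ₂, ∃ m : ℤ,
        (∀ z ∈ Metric.ball (0:ℂ) 1, f z = gammaPow a m z) ∨
        (∀ z ∈ Metric.ball (0:ℂ) 1, f z = gammaPow a m (β z))) ∧
    (∀ m : ℤ, (∀ z ∈ Metric.ball (0:ℂ) 1, gammaPow a m z = z) → m = 0) ∧
    (∀ m k : ℤ, (∀ z ∈ Metric.ball (0:ℂ) 1, gammaPow a m z = gammaPow a k z) → m = k) ∧
    (∀ m k : ℤ,
      ¬ (∀ z ∈ Metric.ball (0:ℂ) 1, gammaPow a m z = gammaPow a k (β z))) := by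
  subst hβ hγ hγinv
  have ha' : |a| < 1 := abs_lt.2 ⟨by linarith [ha.1], ha.2⟩
  have hΓ₂ : Γ₂ ⊆ normalForms a :=
    hmin _ (gammaPow_zero a ▸ gammaPow_mem_normalForms a 0) (neg_mem_normalForms a)
      (gammaPow_one a ▸ gammaPow_mem_normalForms a 1)
      (gammaPow_neg_one ha' ▸ gammaPow_mem_normalForms a (-1))
      fun f hf g hg => comp_mem_normalForms ha' hf hg
  refine ⟨fun f hf => hΓ₂ hf, fun m h => eq_of_eqOn_gammaPow ha' ha.1.ne' ?_,
    fun m k h => eq_of_eqOn_gammaPow ha' ha.1.ne' h, not_eqOn_gammaPow_comp_neg ha'⟩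
  rwa [gammaPow_zero]

/-- The group `Γ₂` generated by `β(z) = −z` and `γ(z) = (z − a)/(1 − a z)` is the free
product `ℤ/2 ∗ ℤ/2`: every element is (on the disk) uniquely of the form `α^m` or
`α^m ∘ β` with `m : ℤ`, and `α^m` is the identity only for `m = 0`. -/
theorem group_generated_by_two_involutions
    (a : ℝ) (ha : a ∈ Set.Ioo (0:ℝ) 1)
    (β γ γinv : ℂ → ℂ)
    (hβ : β = fun z => -z)
    (hγ : γ = fun z : ℂ => (z - (a:ℂ)) / (1 - (a:ℂ) * z))
    (hγinv : γinv = fun z : ℂ => (z + (a:ℂ)) / (1 + (a:ℂ) * z))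
    (Γ₂ : Set (ℂ → ℂ))
    (hidm : id ∈ Γ₂) (hβm : β ∈ Γ₂) (hγm : γ ∈ Γ₂) (hγinvm : γinv ∈ Γ₂)
    (hcomp : ∀ f ∈ Γ₂, ∀ g ∈ Γ₂, f ∘ g ∈ Γ₂)
    (hmin : ∀ S : Set (ℂ → ℂ), id ∈ S → β ∈ S → γ ∈ S → γinv ∈ S →
      (∀ f ∈ S, ∀ g ∈ S, f ∘ g ∈ S) → Γ₂ ⊆ S) :
    (∀ f ∈ Γ₂, ∃ m : ℤ,
        (∀ z ∈ Metric.ball (0:ℂ) 1, f z = gammaPow a m z) ∨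
        (∀ z ∈ Metric.ball (0:ℂ) 1, f z = gammaPow a m (β z))) ∧
    (∀ m : ℤ, (∀ z ∈ Metric.ball (0:ℂ) 1, gammaPow a m z = z) → m = 0) ∧
    (∀ m k : ℤ, (∀ z ∈ Metric.ball (0:ℂ) 1, gammaPow a m z = gammaPow a k z) → m = k) ∧
    (∀ m k : ℤ,
      ¬ (∀ z ∈ Metric.ball (0:ℂ) 1, gammaPow a m z = gammaPow a k (β z))) :=
  group_generated_by_two_involutions_general a ha β γ γinv hβ hγ hγinv Γ₂ hmin
end
end

section
/- Let ℋ be a reproducing kernel Hilbert space of functions on a set X such that the kernel functions k_x are nonzero for all x, and let 𝒜 ⊆ B(ℋ) be the algebra of multiplication operators by multipliers of ℋ. If T ∈ B(ℋ) leaves invariant every closed subspace that is invariant for 𝒜, then T ∈ 𝒜; i.e., the multiplier algebra is a reflexive operator algebra. -/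
open scoped InnerProductSpace

/-!
For each point `x`, the closed subspace `{f | f x = 0}` is invariant under every multiplication
operator, hence under `T`. So the functional `f ↦ (T f) x` vanishes wherever `f ↦ f x` does,
and is therefore a scalar multiple `φ x` of it.
-/

theorem LinearMap.exists_eq_smul_of_ker_le {K V : Type*} [Field K] [AddCommGroup V] [Module K V]
    {ℓ ℓ' : V →ₗ[K] K} (h : LinearMap.ker ℓ ≤ LinearMap.ker ℓ') : ∃ c : K, c • ℓ = ℓ' := by
  have hspan : ℓ' ∈ Submodule.span K (Set.range fun _ : Unit => ℓ) :=
    mem_span_of_iInf_ker_le_ker (by simpa using h)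
  rwa [Set.range_const, Submodule.mem_span_singleton] at hspan

theorem LinearMap.exists_apply_map_eq_mul_of_mapsTo_ker {K V : Type*} [Field K] [AddCommGroup V]
    [Module K V] (ℓ : V →ₗ[K] K) {T : V →ₗ[K] V}
    (hT : ∀ f ∈ LinearMap.ker ℓ, T f ∈ LinearMap.ker ℓ) :
    ∃ c : K, ∀ f, ℓ (T f) = c * ℓ f := by
  obtain ⟨c, hc⟩ := LinearMap.exists_eq_smul_of_ker_le (ℓ' := ℓ ∘ₗ T) hT
  exact ⟨c, fun f => (LinearMap.congr_fun hc f).symm⟩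

section Multiplier

variable {X 𝕜 H : Type*} [RCLike 𝕜] [NormedAddCommGroup H] [InnerProductSpace 𝕜 H]

def IsMultiplicationOperator (ev : H →ₗ[𝕜] (X → 𝕜)) (A : H →L[𝕜] H) : Prop :=
  ∃ φ : X → 𝕜, ∀ (f : H) (x : X), ev (A f) x = φ x * ev f x

abbrev evalAt (ev : H →ₗ[𝕜] (X → 𝕜)) (x : X) : H →ₗ[𝕜] 𝕜 := LinearMap.proj x ∘ₗ ev

theorem isClosed_ker_evalAt {ev : H →ₗ[𝕜] (X → 𝕜)} {k : X → H}
    (hrep : ∀ (f : H) (x : X), ev f x = ⟪k x, f⟫_𝕜) (x : X) :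
    IsClosed (LinearMap.ker (evalAt ev x) : Set H) := by
  have hker : (LinearMap.ker (evalAt ev x) : Set H) =
      LinearMap.ker (innerSL 𝕜 (k x) : H →ₗ[𝕜] 𝕜) := by
    ext f
    simp [hrep]
  rw [hker]
  exact (innerSL 𝕜 (k x)).isClosed_ker

theorem IsMultiplicationOperator.mapsTo_ker_evalAt {ev : H →ₗ[𝕜] (X → 𝕜)} {A : H →L[𝕜] H}
    (hA : IsMultiplicationOperator ev A) (x : X) :
    ∀ f ∈ LinearMap.ker (evalAt ev x), A f ∈ LinearMap.ker (evalAt ev x) := by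
  obtain ⟨φ, hφ⟩ := hA
  intro f hf
  simp_all

end Multiplier

theorem multiplier_algebra_reflexive_general {X : Type*} {H : Type*} [NormedAddCommGroup H]
    [InnerProductSpace ℂ H]
    (ev : H →ₗ[ℂ] (X → ℂ)) (k : X → H)
    (hrep : ∀ (f : H) (x : X), ev f x = ⟪k x, f⟫_ℂ)
    (T : H →L[ℂ] H)
    (hT : ∀ M : Submodule ℂ H, IsClosed (M : Set H) →
      (∀ A : H →L[ℂ] H,
        (∃ φ : X → ℂ, ∀ (f : H) (x : X), ev (A f) x = φ x * ev f x) →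
        ∀ f ∈ M, A f ∈ M) →
      ∀ f ∈ M, T f ∈ M) :
    ∃ φ : X → ℂ, ∀ (f : H) (x : X), ev (T f) x = φ x * ev f x := by
  have hker (x : X) : ∀ f ∈ LinearMap.ker (evalAt ev x), T f ∈ LinearMap.ker (evalAt ev x) :=
    hT _ (isClosed_ker_evalAt hrep x) fun A hA => IsMultiplicationOperator.mapsTo_ker_evalAt hA x
  choose φ hφ using fun x => (evalAt ev x).exists_apply_map_eq_mul_of_mapsTo_ker (hker x)
  exact ⟨φ, fun f x => hφ x f⟩

/-- The multiplier algebra of a reproducing kernel Hilbert space (with nonzero kernel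
functions) is reflexive: an operator leaving invariant every closed subspace that is
invariant for all multiplication operators is itself a multiplication operator. -/
theorem multiplier_algebra_reflexive {X : Type*} {H : Type*} [NormedAddCommGroup H]
    [InnerProductSpace ℂ H] [CompleteSpace H]
    (ev : H →ₗ[ℂ] (X → ℂ)) (k : X → H)
    (hk : ∀ x, k x ≠ 0)
    (hrep : ∀ (f : H) (x : X), ev f x = ⟪k x, f⟫_ℂ)
    (T : H →L[ℂ] H)
    (hT : ∀ M : Submodule ℂ H, IsClosed (M : Set H) →
      (∀ A : H →L[ℂ] H,
        (∃ φ : X → ℂ, ∀ (f : H) (x : X), ev (A f) x = φ x * ev f x) →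
        ∀ f ∈ M, A f ∈ M) →
      ∀ f ∈ M, T f ∈ M) :
    ∃ φ : X → ℂ, ∀ (f : H) (x : X), ev (T f) x = φ x * ev f x :=
  multiplier_algebra_reflexive_general ev k hrep T hT
end

section
/- Let ℳ be a closed subspace of H² containing the constant function 1, let 𝒜 be the algebra of multipliers of ℳ (functions φ with φℳ ⊆ ℳ), represented as multiplication operators on ℳ, and suppose the closure of 𝒜·1 in ℳ equals ℳ. Then the commutant of 𝒜 in B(ℳ) equals 𝒜: every bounded operator T on ℳ commuting with all multiplication operators M_g (g ∈ 𝒜) is itself a multiplication operator M_h with h = T(1) ∈ 𝒜. -/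
open scoped InnerProductSpace

noncomputable section

/-! The identity `T (M_φ 1) = M_φ (T 1) = φ · T(1)` says that `T` acts as multiplication by
`T(1)` on `𝒜 · 1`. Point evaluations are continuous, being inner products with the kernel
functions, so this identity extends from the dense set `𝒜 · 1` to the whole space. -/

namespace MultiplierCommutant

section Multiplication

variable {X R E : Type*} [CommSemiring R] [AddCommMonoid E] [Module R E] [TopologicalSpace E]

def IsMultiplicationOperator (ev : E →ₗ[R] (X → R)) (A : E →L[R] E) : Prop :=
  ∃ φ : X → R, ∀ (f : E) (x : X), ev (A f) x = φ x * ev f x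

theorem IsMultiplicationOperator.eval_apply_of_comp_eq {ev : E →ₗ[R] (X → R)}
    {A T : E →L[R] E} (hA : IsMultiplicationOperator ev A) {e : E} (he : ∀ x, ev e x = 1)
    (hTA : T.comp A = A.comp T) (x : X) :
    ev (T (A e)) x = ev (T e) x * ev (A e) x := by
  obtain ⟨φ, hφ⟩ := hA
  rw [← ContinuousLinearMap.comp_apply, hTA, ContinuousLinearMap.comp_apply, hφ, hφ, he,
    mul_one, mul_comm]

end Multiplication

theorem continuous_eval_of_eq_inner {X 𝕜 E : Type*} [RCLike 𝕜] [NormedAddCommGroup E]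
    [InnerProductSpace 𝕜 E] {ev : E →ₗ[𝕜] (X → 𝕜)} {k : X → E}
    (hrep : ∀ (f : E) (x : X), ev f x = ⟪k x, f⟫_𝕜) (x : X) :
    Continuous fun f => ev f x := by
  simp only [hrep]
  exact continuous_const.inner continuous_id

end MultiplierCommutant

theorem commutant_of_multiplier_algebra_general {X : Type*} {H : Type*} [NormedAddCommGroup H]
    [InnerProductSpace ℂ H]
    (ev : H →ₗ[ℂ] (X → ℂ))
    (k : X → H) (hrep : ∀ (f : H) (x : X), ev f x = ⟪k x, f⟫_ℂ)
    (e : H) (he : ∀ x, ev e x = 1)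
    (hdense : Dense {g : H | ∃ A : H →L[ℂ] H,
      (∃ φ : X → ℂ, ∀ (f : H) (x : X), ev (A f) x = φ x * ev f x) ∧ g = A e})
    (T : H →L[ℂ] H)
    (hT : ∀ A : H →L[ℂ] H,
      (∃ φ : X → ℂ, ∀ (f : H) (x : X), ev (A f) x = φ x * ev f x) →
      T.comp A = A.comp T) :
    ∀ (f : H) (x : X), ev (T f) x = ev (T e) x * ev f x := by
  intro f x
  have hev := MultiplierCommutant.continuous_eval_of_eq_inner hrep x
  refine congrFun (Continuous.ext_on hdense (hev.comp T.continuous)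
    (continuous_const.mul hev) ?_) f
  rintro _ ⟨A, hA, rfl⟩
  exact MultiplierCommutant.IsMultiplicationOperator.eval_apply_of_comp_eq hA he (hT A hA) x

/-- Let `ℳ` be a Hilbert function space (a reproducing kernel Hilbert space, as any
closed subspace of `H²` is) containing the constant function `1`, and let `𝒜` be its
multiplier algebra, represented by multiplication operators. If `𝒜 · 1` is dense in
`ℳ`, then the commutant of `𝒜` equals `𝒜`: any bounded operator `T` commuting with all
multiplication operators is multiplication by `h = T(1)`. -/
theorem commutant_of_multiplier_algebra {X : Type*} {H : Type*} [NormedAddCommGroup H]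
    [InnerProductSpace ℂ H] [CompleteSpace H]
    (ev : H →ₗ[ℂ] (X → ℂ)) (hinj : Function.Injective ev)
    (k : X → H) (hrep : ∀ (f : H) (x : X), ev f x = ⟪k x, f⟫_ℂ)
    (e : H) (he : ∀ x, ev e x = 1)
    (hdense : Dense {g : H | ∃ A : H →L[ℂ] H,
      (∃ φ : X → ℂ, ∀ (f : H) (x : X), ev (A f) x = φ x * ev f x) ∧ g = A e})
    (T : H →L[ℂ] H)
    (hT : ∀ A : H →L[ℂ] H,
      (∃ φ : X → ℂ, ∀ (f : H) (x : X), ev (A f) x = φ x * ev f x) →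
      T.comp A = A.comp T) :
    ∀ (f : H) (x : X), ev (T f) x = ev (T e) x * ev f x :=
  commutant_of_multiplier_algebra_general ev k hrep e he hdense T hT
end
end
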